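/- Let γ be a positive locally finite measure on ℝⁿ and S a locally finite subset of ℝⁿ. Suppose that for every continuous compactly supported f : ℝⁿ → ℝ, (1/|B_R|) ∫_{B_R} H_f(S − t) dt → γ(f) as R → ∞, where H_f(S) = Σ_{x,y ∈ S} ψ(x) f(y − x) for a fixed continuous nonnegative compactly supported ψ with integral 1. Then the measures γ_R = (1/|B_R|) Σ_{x,y ∈ S ∩ B_R} δ_{y−x} converge vaguely to γ as R → ∞. -/
import Mathlib


open Metric Set Filter MeasureTheory

variable {n : ℕ}

/-- `S` is locally finite: its intersection with every compact set is finite. -/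
def LocallyFiniteSet (S : Set (EuclideanSpace ℝ (Fin n))) : Prop :=
  ∀ K : Set (EuclideanSpace ℝ (Fin n)), IsCompact K → (S ∩ K).Finite

/-- The translation `S - t`. -/
def translateSet (t : EuclideanSpace ℝ (Fin n))
    (S : Set (EuclideanSpace ℝ (Fin n))) : Set (EuclideanSpace ℝ (Fin n)) :=
  (fun x => x - t) '' S

/-- `H_f(S) = ∑_{x,y ∈ S} ψ(x) f(y - x)`. -/
noncomputable def Hfun (ψ f : EuclideanSpace ℝ (Fin n) → ℝ)
    (S : Set (EuclideanSpace ℝ (Fin n))) : ℝ :=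
  ∑' x : S, ∑' y : S, ψ x * f ((y : EuclideanSpace ℝ (Fin n)) - x)

lemma aux_tsum_subtype_eq_sum_finset {α : Type*} (s : Set α) (F : Finset α) (g : α → ℝ)
    (hFs : ↑F ⊆ s) (h : ∀ x ∈ s, g x ≠ 0 → x ∈ F) :
    ∑' x : s, g x = ∑ x ∈ F, g x := by
  rw [tsum_subtype, tsum_eq_sum (s := F) ?_]
  · exact Finset.sum_congr rfl fun x hx => indicator_of_mem (hFs hx) g
  · intro b hb
    by_cases hbs : b ∈ s
    · rw [indicator_of_mem hbs]
      by_contra hg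
      exact hb (h b hbs hg)
    · exact indicator_of_notMem hbs g

lemma aux_tsum_image (t : EuclideanSpace ℝ (Fin n)) (S : Set (EuclideanSpace ℝ (Fin n)))
    (g : EuclideanSpace ℝ (Fin n) → ℝ) :
    ∑' x : ((fun x => x - t) '' S), g x = ∑' x : S, g ((x : EuclideanSpace ℝ (Fin n)) - t) :=
  ((Equiv.Set.image (fun x => x - t) S (sub_left_injective)).tsum_eq
    (fun x : ((fun x => x - t) '' S) => g x)).symm

lemma Hfun_translate (t : EuclideanSpace ℝ (Fin n)) (S : Set (EuclideanSpace ℝ (Fin n)))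
    (ψ f : EuclideanSpace ℝ (Fin n) → ℝ) :
    Hfun ψ f (translateSet t S) =
      ∑' x : S, ∑' y : S, ψ ((x : EuclideanSpace ℝ (Fin n)) - t) *
        f ((y : EuclideanSpace ℝ (Fin n)) - x) := by
  unfold Hfun translateSet
  rw [aux_tsum_image t S
    (fun x => ∑' y : ((fun x => x - t) '' S), ψ x * f ((y : EuclideanSpace ℝ (Fin n)) - x))]
  refine tsum_congr fun x => ?_
  rw [aux_tsum_image t S (fun y => ψ ((x : EuclideanSpace ℝ (Fin n)) - t) *
    f (y - ((x : EuclideanSpace ℝ (Fin n)) - t)))]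
  refine tsum_congr fun y => ?_
  rw [sub_sub_sub_cancel_right]

lemma Hfun_eval (S : Set (EuclideanSpace ℝ (Fin n)))
    (ψ f : EuclideanSpace ℝ (Fin n) → ℝ) {r K : ℝ} (hr : 0 ≤ r) (hK : 0 ≤ K)
    (hψr : ∀ x, r < ‖x‖ → ψ x = 0) (hfK : ∀ x, K < ‖x‖ → f x = 0)
    {R : ℝ} (F : Finset (EuclideanSpace ℝ (Fin n)))
    (hF : (F : Set (EuclideanSpace ℝ (Fin n))) = S ∩ closedBall 0 (R + r + K))
    (t : EuclideanSpace ℝ (Fin n)) (ht : t ∈ closedBall (0 : EuclideanSpace ℝ (Fin n)) R) :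
    Hfun ψ f (translateSet t S) =
      ∑ x ∈ F, ∑ y ∈ F, ψ (x - t) * f (y - x) := by
  have htn : ‖t‖ ≤ R := by simpa [dist_eq_norm] using mem_closedBall.1 ht
  have hmem : ∀ x : EuclideanSpace ℝ (Fin n), x ∈ F ↔ x ∈ S ∧ ‖x‖ ≤ R + r + K := by
    intro x
    constructor
    · intro hx
      have := hF ▸ (Finset.mem_coe.2 hx)
      exact ⟨this.1, by simpa [dist_eq_norm] using this.2⟩
    · intro hx
      have : x ∈ S ∩ closedBall 0 (R + r + K) := ⟨hx.1, by simpa [dist_eq_norm] using hx.2⟩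
      exact Finset.mem_coe.1 (hF ▸ this)
  have hFS : (F : Set (EuclideanSpace ℝ (Fin n))) ⊆ S := by
    rw [hF]; exact inter_subset_left
  rw [Hfun_translate]
  -- inner sums
  have inner_eq : ∀ x : EuclideanSpace ℝ (Fin n),
      ∑' y : S, ψ (x - t) * f ((y : EuclideanSpace ℝ (Fin n)) - x)
        = ∑ y ∈ F, ψ (x - t) * f (y - x) := by
    intro x
    by_cases hψx : ψ (x - t) = 0
    · simp [hψx]
    · refine aux_tsum_subtype_eq_sum_finset S F (fun y => ψ (x - t) * f (y - x)) hFS ?_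
      intro y hyS hne
      have hfne : f (y - x) ≠ 0 := fun h0 => hne (by simp [h0])
      have hxr : ‖x - t‖ ≤ r := by
        by_contra hc
        exact hψx (hψr _ (lt_of_not_ge hc))
      have hyK : ‖y - x‖ ≤ K := by
        by_contra hc
        exact hfne (hfK _ (lt_of_not_ge hc))
      have hxn : ‖x‖ ≤ R + r := by
        calc ‖x‖ = ‖(x - t) + t‖ := by rw [sub_add_cancel]
        _ ≤ ‖x - t‖ + ‖t‖ := norm_add_le _ _
        _ ≤ r + R := add_le_add hxr htn
        _ = R + r := add_comm _ _
      have hyn : ‖y‖ ≤ R + r + K := by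
        calc ‖y‖ = ‖(y - x) + x‖ := by rw [sub_add_cancel]
        _ ≤ ‖y - x‖ + ‖x‖ := norm_add_le _ _
        _ ≤ K + (R + r) := add_le_add hyK hxn
        _ = R + r + K := by ring
      exact (hmem y).2 ⟨hyS, hyn⟩
  calc ∑' x : S, ∑' y : S, ψ ((x : EuclideanSpace ℝ (Fin n)) - t) *
        f ((y : EuclideanSpace ℝ (Fin n)) - x)
      = ∑' x : S, ∑ y ∈ F, ψ ((x : EuclideanSpace ℝ (Fin n)) - t) * f (y - x) := by
        exact tsum_congr fun x => inner_eq x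
    _ = ∑ x ∈ F, ∑ y ∈ F, ψ (x - t) * f (y - x) := by
        refine aux_tsum_subtype_eq_sum_finset S F
          (fun x => ∑ y ∈ F, ψ (x - t) * f (y - x)) hFS ?_
        intro x hxS hne
        obtain ⟨y, _, hy⟩ := Finset.exists_ne_zero_of_sum_ne_zero hne
        have hψx : ψ (x - t) ≠ 0 := fun h0 => hy (by simp [h0])
        have hxr : ‖x - t‖ ≤ r := by
          by_contra hc
          exact hψx (hψr _ (lt_of_not_ge hc))
        have hxn : ‖x‖ ≤ R + r + K := by
          calc ‖x‖ = ‖(x - t) + t‖ := by rw [sub_add_cancel]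
          _ ≤ ‖x - t‖ + ‖t‖ := norm_add_le _ _
          _ ≤ r + R := add_le_add hxr htn
          _ ≤ R + r + K := by linarith
        exact (hmem x).2 ⟨hxS, hxn⟩

lemma integrable_psi_shift (ψ : EuclideanSpace ℝ (Fin n) → ℝ) (hψc : Continuous ψ)
    (hψs : HasCompactSupport ψ) (x : EuclideanSpace ℝ (Fin n)) :
    Integrable (fun t => ψ (x - t)) volume :=
  (hψc.comp (continuous_const.sub continuous_id)).integrable_of_hasCompactSupport
    (hψs.comp_homeomorph (Homeomorph.subLeft x))

lemma weight_nonneg (ψ : EuclideanSpace ℝ (Fin n) → ℝ) (hψ0 : ∀ x, 0 ≤ ψ x)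
    (R : ℝ) (x : EuclideanSpace ℝ (Fin n)) :
    0 ≤ ∫ t in closedBall (0 : EuclideanSpace ℝ (Fin n)) R, ψ (x - t) :=
  setIntegral_nonneg measurableSet_closedBall fun t _ => hψ0 _

lemma weight_le_one (ψ : EuclideanSpace ℝ (Fin n) → ℝ) (hψc : Continuous ψ)
    (hψ0 : ∀ x, 0 ≤ ψ x) (hψs : HasCompactSupport ψ) (hψ1 : ∫ x, ψ x = 1)
    (R : ℝ) (x : EuclideanSpace ℝ (Fin n)) :
    ∫ t in closedBall (0 : EuclideanSpace ℝ (Fin n)) R, ψ (x - t) ≤ 1 := by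
  calc ∫ t in closedBall (0 : EuclideanSpace ℝ (Fin n)) R, ψ (x - t)
      ≤ ∫ t, ψ (x - t) := setIntegral_le_integral (integrable_psi_shift ψ hψc hψs x)
        (Eventually.of_forall fun t => hψ0 _)
    _ = 1 := by rw [integral_sub_left_eq_self ψ volume x]; exact hψ1

lemma weight_eq_one (ψ : EuclideanSpace ℝ (Fin n) → ℝ)
    (hψ1 : ∫ x, ψ x = 1) {r : ℝ} (hψr : ∀ x, r < ‖x‖ → ψ x = 0)
    {R : ℝ} {x : EuclideanSpace ℝ (Fin n)} (hx : ‖x‖ + r ≤ R) :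
    ∫ t in closedBall (0 : EuclideanSpace ℝ (Fin n)) R, ψ (x - t) = 1 := by
  rw [setIntegral_eq_integral_of_forall_compl_eq_zero (fun t ht => ?_)]
  · rw [integral_sub_left_eq_self ψ volume x]; exact hψ1
  · refine hψr _ ?_
    have htn : R < ‖t‖ := by
      by_contra hc
      exact ht (by simpa [dist_eq_norm] using le_of_not_gt hc)
    have : ‖t‖ - ‖x‖ ≤ ‖x - t‖ := by
      calc ‖t‖ - ‖x‖ ≤ ‖t - x‖ := by
            have := norm_sub_norm_le t x
            linarith
        _ = ‖x - t‖ := norm_sub_rev t x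
    linarith

lemma J_eq (S : Set (EuclideanSpace ℝ (Fin n)))
    (ψ f : EuclideanSpace ℝ (Fin n) → ℝ) (hψc : Continuous ψ)
    {r K : ℝ} (hr : 0 ≤ r) (hK : 0 ≤ K)
    (hψr : ∀ x, r < ‖x‖ → ψ x = 0) (hfK : ∀ x, K < ‖x‖ → f x = 0)
    {R : ℝ} (F : Finset (EuclideanSpace ℝ (Fin n)))
    (hF : (F : Set (EuclideanSpace ℝ (Fin n))) = S ∩ closedBall 0 (R + r + K)) :
    ∫ t in closedBall (0 : EuclideanSpace ℝ (Fin n)) R, Hfun ψ f (translateSet t S)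
      = ∑ x ∈ F, ∑ y ∈ F,
          (∫ t in closedBall (0 : EuclideanSpace ℝ (Fin n)) R, ψ (x - t)) * f (y - x) := by
  have hint : ∀ x y : EuclideanSpace ℝ (Fin n),
      IntegrableOn (fun t => ψ (x - t) * f (y - x))
        (closedBall (0 : EuclideanSpace ℝ (Fin n)) R) volume :=
    fun x y => (((hψc.comp (continuous_const.sub continuous_id)).locallyIntegrable).integrableOn_isCompact
      (isCompact_closedBall _ _)).mul_const _
  calc ∫ t in closedBall (0 : EuclideanSpace ℝ (Fin n)) R, Hfun ψ f (translateSet t S)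
      = ∫ t in closedBall (0 : EuclideanSpace ℝ (Fin n)) R,
          ∑ x ∈ F, ∑ y ∈ F, ψ (x - t) * f (y - x) := by
        refine setIntegral_congr_fun measurableSet_closedBall fun t ht => ?_
        exact Hfun_eval S ψ f hr hK hψr hfK F hF t ht
    _ = ∑ x ∈ F, ∫ t in closedBall (0 : EuclideanSpace ℝ (Fin n)) R,
          ∑ y ∈ F, ψ (x - t) * f (y - x) := by
        exact integral_finset_sum F fun x _ => integrable_finset_sum F fun y _ => hint x y
    _ = ∑ x ∈ F, ∑ y ∈ F,
          ∫ t in closedBall (0 : EuclideanSpace ℝ (Fin n)) R, ψ (x - t) * f (y - x) := by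
        exact Finset.sum_congr rfl fun x _ => integral_finset_sum F fun y _ => hint x y
    _ = ∑ x ∈ F, ∑ y ∈ F,
          (∫ t in closedBall (0 : EuclideanSpace ℝ (Fin n)) R, ψ (x - t)) * f (y - x) := by
        exact Finset.sum_congr rfl fun x _ => Finset.sum_congr rfl fun y _ =>
          integral_mul_const _ _

lemma P_eq (S : Set (EuclideanSpace ℝ (Fin n))) (f : EuclideanSpace ℝ (Fin n) → ℝ)
    {R : ℝ} (G : Finset (EuclideanSpace ℝ (Fin n)))
    (hG : (G : Set (EuclideanSpace ℝ (Fin n))) = S ∩ closedBall 0 R) :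
    ∑' x : (S ∩ closedBall (0 : EuclideanSpace ℝ (Fin n)) R : Set _),
      ∑' y : (S ∩ closedBall (0 : EuclideanSpace ℝ (Fin n)) R : Set _),
        f ((y : EuclideanSpace ℝ (Fin n)) - x)
      = ∑ x ∈ G, ∑ y ∈ G, f (y - x) := by
  have hsub : (G : Set (EuclideanSpace ℝ (Fin n))) ⊆
      (S ∩ closedBall (0 : EuclideanSpace ℝ (Fin n)) R : Set _) := by rw [hG]
  have hmem : ∀ x, x ∈ (S ∩ closedBall (0 : EuclideanSpace ℝ (Fin n)) R : Set _) → x ∈ G :=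
    fun x hx => Finset.mem_coe.1 (hG ▸ hx)
  calc ∑' x : (S ∩ closedBall (0 : EuclideanSpace ℝ (Fin n)) R : Set _),
      ∑' y : (S ∩ closedBall (0 : EuclideanSpace ℝ (Fin n)) R : Set _),
        f ((y : EuclideanSpace ℝ (Fin n)) - x)
      = ∑' x : (S ∩ closedBall (0 : EuclideanSpace ℝ (Fin n)) R : Set _),
          ∑ y ∈ G, f (y - (x : EuclideanSpace ℝ (Fin n))) := by
        refine tsum_congr fun x => ?_
        exact aux_tsum_subtype_eq_sum_finset _ G
          (fun y => f (y - (x : EuclideanSpace ℝ (Fin n)))) hsub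
          (fun y hy _ => hmem y hy)
    _ = ∑ x ∈ G, ∑ y ∈ G, f (y - x) :=
        aux_tsum_subtype_eq_sum_finset _ G (fun x => ∑ y ∈ G, f (y - x)) hsub
          (fun x hx _ => hmem x hx)

lemma claim1 (S : Set (EuclideanSpace ℝ (Fin n)))
    (ψ f : EuclideanSpace ℝ (Fin n) → ℝ) (hψc : Continuous ψ) (hψ0 : ∀ x, 0 ≤ ψ x)
    (hψs : HasCompactSupport ψ) (hψ1 : ∫ x, ψ x = 1) (hf0 : ∀ x, 0 ≤ f x)
    {r K : ℝ} (hr : 0 ≤ r) (hK : 0 ≤ K)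
    (hψr : ∀ x, r < ‖x‖ → ψ x = 0) (hfK : ∀ x, K < ‖x‖ → f x = 0)
    {R : ℝ} (F : Finset (EuclideanSpace ℝ (Fin n)))
    (hF : (F : Set (EuclideanSpace ℝ (Fin n))) = S ∩ closedBall 0 (R + r + K)) :
    ∫ t in closedBall (0 : EuclideanSpace ℝ (Fin n)) R, Hfun ψ f (translateSet t S)
      ≤ ∑ x ∈ F, ∑ y ∈ F, f (y - x) := by
  rw [J_eq S ψ f hψc hr hK hψr hfK F hF]
  refine Finset.sum_le_sum fun x _ => Finset.sum_le_sum fun y _ => ?_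
  exact mul_le_of_le_one_left (hf0 _) (weight_le_one ψ hψc hψ0 hψs hψ1 R x)

lemma claim2 (S : Set (EuclideanSpace ℝ (Fin n)))
    (ψ f : EuclideanSpace ℝ (Fin n) → ℝ) (hψc : Continuous ψ) (hψ0 : ∀ x, 0 ≤ ψ x)
    (hψ1 : ∫ x, ψ x = 1) (hf0 : ∀ x, 0 ≤ f x)
    {r K : ℝ} (hr : 0 ≤ r) (hK : 0 ≤ K)
    (hψr : ∀ x, r < ‖x‖ → ψ x = 0) (hfK : ∀ x, K < ‖x‖ → f x = 0)
    {R : ℝ} (G F' : Finset (EuclideanSpace ℝ (Fin n)))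
    (hG : (G : Set (EuclideanSpace ℝ (Fin n))) = S ∩ closedBall 0 R)
    (hF' : (F' : Set (EuclideanSpace ℝ (Fin n))) = S ∩ closedBall 0 ((R + r) + r + K)) :
    ∑ x ∈ G, ∑ y ∈ G, f (y - x)
      ≤ ∫ t in closedBall (0 : EuclideanSpace ℝ (Fin n)) (R + r),
          Hfun ψ f (translateSet t S) := by
  have hGF : G ⊆ F' := by
    refine Finset.coe_subset.1 ?_
    rw [hG, hF']
    exact inter_subset_inter_right _ (closedBall_subset_closedBall (by linarith))
  rw [J_eq S ψ f hψc hr hK hψr hfK F' hF']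
  have hw1 : ∀ x ∈ G, (∫ t in closedBall (0 : EuclideanSpace ℝ (Fin n)) (R + r), ψ (x - t)) = 1 := by
    intro x hx
    have hxR : ‖x‖ ≤ R := by
      have := hG ▸ Finset.mem_coe.2 hx
      simpa [dist_eq_norm] using this.2
    exact weight_eq_one ψ hψ1 hψr (by linarith)
  calc ∑ x ∈ G, ∑ y ∈ G, f (y - x)
      ≤ ∑ x ∈ G, ∑ y ∈ F', f (y - x) :=
        Finset.sum_le_sum fun x _ =>
          Finset.sum_le_sum_of_subset_of_nonneg hGF fun y _ _ => hf0 _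
    _ = ∑ x ∈ G, ∑ y ∈ F',
          (∫ t in closedBall (0 : EuclideanSpace ℝ (Fin n)) (R + r), ψ (x - t)) * f (y - x) := by
        refine Finset.sum_congr rfl fun x hx => Finset.sum_congr rfl fun y _ => ?_
        rw [hw1 x hx, one_mul]
    _ ≤ ∑ x ∈ F', ∑ y ∈ F',
          (∫ t in closedBall (0 : EuclideanSpace ℝ (Fin n)) (R + r), ψ (x - t)) * f (y - x) :=
        Finset.sum_le_sum_of_subset_of_nonneg hGF fun x _ _ =>
          Finset.sum_nonneg fun y _ => mul_nonneg (weight_nonneg ψ hψ0 _ x) (hf0 _)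

noncomputable def vol (n : ℕ) (R : ℝ) : ℝ :=
  (volume (closedBall (0 : EuclideanSpace ℝ (Fin n)) R)).toReal

lemma vol_eq {R : ℝ} (hR : 0 ≤ R) :
    vol n R = R ^ n * (volume (ball (0 : EuclideanSpace ℝ (Fin n)) 1)).toReal := by
  unfold vol
  rw [MeasureTheory.Measure.addHaar_closedBall _ _ hR]
  rw [ENNReal.toReal_mul, ENNReal.toReal_ofReal (by positivity), finrank_euclideanSpace_fin]

lemma c0_pos : (0:ℝ) < (volume (ball (0 : EuclideanSpace ℝ (Fin n)) 1)).toReal :=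
  ENNReal.toReal_pos (measure_ball_pos volume _ one_pos).ne' measure_ball_lt_top.ne

lemma vol_pos {R : ℝ} (hR : 0 < R) : 0 < vol n R := by
  rw [vol_eq hR.le]
  exact mul_pos (pow_pos hR n) c0_pos

lemma ratio_tendsto (n : ℕ) (a : ℝ) :
    Tendsto (fun R : ℝ => vol n (R + a) / vol n R) atTop (nhds 1) := by
  have h1 : Tendsto (fun R : ℝ => ((R + a) / R) ^ n) atTop (nhds 1) := by
    have hbase : Tendsto (fun R : ℝ => (R + a) / R) atTop (nhds 1) := by
      have h2 : Tendsto (fun R : ℝ => 1 + a * R⁻¹) atTop (nhds 1) := by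
        have := (tendsto_inv_atTop_zero (𝕜 := ℝ)).const_mul a
        have h3 := tendsto_const_nhds (x := (1:ℝ)) (f := atTop).add this
        simpa using h3
      refine h2.congr' ?_
      filter_upwards [eventually_ge_atTop (1:ℝ)] with R hR
      have hR0 : R ≠ 0 := by linarith
      field_simp
    simpa using hbase.pow n
  refine h1.congr' ?_
  filter_upwards [eventually_ge_atTop (1:ℝ), eventually_ge_atTop (1 - a)] with R hR1 hR2
  have hR0 : (0:ℝ) < R := by linarith
  have hRa : (0:ℝ) ≤ R + a := by linarith
  rw [vol_eq hRa, vol_eq hR0.le, div_pow]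
  rw [mul_div_mul_right _ _ (c0_pos (n := n)).ne']

lemma main_nonneg (S : Set (EuclideanSpace ℝ (Fin n))) (hS : LocallyFiniteSet S)
    (γ : Measure (EuclideanSpace ℝ (Fin n)))
    (ψ : EuclideanSpace ℝ (Fin n) → ℝ) (hψc : Continuous ψ) (hψ0 : ∀ x, 0 ≤ ψ x)
    (hψs : HasCompactSupport ψ) (hψ1 : ∫ x, ψ x = 1)
    (hconv : ∀ f : EuclideanSpace ℝ (Fin n) → ℝ, Continuous f → HasCompactSupport f →
      Tendsto (fun R : ℝ =>
          (volume (closedBall (0 : EuclideanSpace ℝ (Fin n)) R)).toReal⁻¹ *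
            ∫ t in closedBall (0 : EuclideanSpace ℝ (Fin n)) R, Hfun ψ f (translateSet t S))
        atTop (nhds (∫ z, f z ∂γ)))
    (f : EuclideanSpace ℝ (Fin n) → ℝ) (hfc : Continuous f) (hfs : HasCompactSupport f)
    (hf0 : ∀ x, 0 ≤ f x) :
    Tendsto (fun R : ℝ =>
        (volume (closedBall (0 : EuclideanSpace ℝ (Fin n)) R)).toReal⁻¹ *
          ∑' x : (S ∩ closedBall (0 : EuclideanSpace ℝ (Fin n)) R : Set _),
            ∑' y : (S ∩ closedBall (0 : EuclideanSpace ℝ (Fin n)) R : Set _),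
              f ((y : EuclideanSpace ℝ (Fin n)) - x))
      atTop (nhds (∫ z, f z ∂γ)) := by
  classical
  -- support radii
  obtain ⟨r0, hr0⟩ := hψs.isCompact.isBounded.subset_closedBall 0
  obtain ⟨K0, hK0⟩ := hfs.isCompact.isBounded.subset_closedBall 0
  set r : ℝ := max r0 0 with hr_def
  set K : ℝ := max K0 0 with hK_def
  have hr : 0 ≤ r := le_max_right _ _
  have hK : 0 ≤ K := le_max_right _ _
  have hψr : ∀ x, r < ‖x‖ → ψ x = 0 := by
    intro x hx
    refine image_eq_zero_of_notMem_tsupport fun hmem => ?_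
    have : ‖x‖ ≤ r0 := by simpa [dist_eq_norm] using hr0 hmem
    have : ‖x‖ ≤ r := this.trans (le_max_left _ _)
    linarith
  have hfK : ∀ x, K < ‖x‖ → f x = 0 := by
    intro x hx
    refine image_eq_zero_of_notMem_tsupport fun hmem => ?_
    have : ‖x‖ ≤ K0 := by simpa [dist_eq_norm] using hK0 hmem
    have : ‖x‖ ≤ K := this.trans (le_max_left _ _)
    linarith
  set c : ℝ := r + K with hc_def
  have hc : 0 ≤ c := by positivity
  set l : ℝ := ∫ z, f z ∂γ with hl_def
  set J : ℝ → ℝ := fun R =>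
    ∫ t in closedBall (0 : EuclideanSpace ℝ (Fin n)) R, Hfun ψ f (translateSet t S) with hJ_def
  have hg := hconv f hfc hfs
  -- Finsets
  set G : ℝ → Finset (EuclideanSpace ℝ (Fin n)) :=
    fun R => (hS _ (isCompact_closedBall (0 : EuclideanSpace ℝ (Fin n)) R)).toFinset with hG_def
  have hGcoe : ∀ R : ℝ, ((G R : Finset (EuclideanSpace ℝ (Fin n))) : Set _)
      = S ∩ closedBall 0 R := fun R => Set.Finite.coe_toFinset _
  set P : ℝ → ℝ := fun R =>
    ∑' x : (S ∩ closedBall (0 : EuclideanSpace ℝ (Fin n)) R : Set _),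
      ∑' y : (S ∩ closedBall (0 : EuclideanSpace ℝ (Fin n)) R : Set _),
        f ((y : EuclideanSpace ℝ (Fin n)) - x) with hP_def
  have hPsum : ∀ R : ℝ, P R = ∑ x ∈ G R, ∑ y ∈ G R, f (y - x) :=
    fun R => P_eq S f (G R) (hGcoe R)
  set A : ℝ → ℝ := fun R => (vol n R)⁻¹ * P R with hA_def
  set lo : ℝ → ℝ := fun R => (vol n R)⁻¹ * J (R - c) with hlo_def
  set hi : ℝ → ℝ := fun R => (vol n R)⁻¹ * J (R + r) with hhi_def
  have hvol_nonneg : ∀ R : ℝ, 0 ≤ vol n R := fun R => ENNReal.toReal_nonneg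
  -- lower bound
  have h_lo_le : ∀ᶠ R in atTop, lo R ≤ A R := by
    filter_upwards [eventually_ge_atTop (c + 1)] with R hR
    have hJle : J (R - c) ≤ ∑ x ∈ G R, ∑ y ∈ G R, f (y - x) := by
      refine claim1 S ψ f hψc hψ0 hψs hψ1 hf0 hr hK hψr hfK (G R) ?_
      rw [show (R - c) + r + K = R by rw [hc_def]; ring]
      exact hGcoe R
    show (vol n R)⁻¹ * J (R - c) ≤ (vol n R)⁻¹ * P R
    rw [hPsum R]
    exact mul_le_mul_of_nonneg_left hJle (inv_nonneg.2 (hvol_nonneg R))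
  -- upper bound
  have h_hi_le : ∀ᶠ R in atTop, A R ≤ hi R := by
    filter_upwards [eventually_ge_atTop (0:ℝ)] with R hR
    have hPle : ∑ x ∈ G R, ∑ y ∈ G R, f (y - x) ≤ J (R + r) :=
      claim2 S ψ f hψc hψ0 hψ1 hf0 hr hK hψr hfK (G R) (G ((R + r) + r + K))
        (hGcoe R) (hGcoe _)
    show (vol n R)⁻¹ * P R ≤ (vol n R)⁻¹ * J (R + r)
    rw [hPsum R]
    exact mul_le_mul_of_nonneg_left hPle (inv_nonneg.2 (hvol_nonneg R))
  -- limits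
  have hlo_tendsto : Tendsto lo atTop (nhds l) := by
    have h1 : Tendsto (fun R : ℝ => (vol n (R - c))⁻¹ * J (R - c)) atTop (nhds l) := by
      have := hg.comp (tendsto_atTop_add_const_right atTop (-c) tendsto_id)
      simpa [Function.comp_def, sub_eq_add_neg, vol] using this
    have h2 : Tendsto (fun R : ℝ => vol n (R - c) / vol n R) atTop (nhds 1) := by
      have := ratio_tendsto n (-c)
      simpa [sub_eq_add_neg] using this
    have h3 := h1.mul h2
    rw [mul_one] at h3
    refine h3.congr' ?_
    filter_upwards [eventually_ge_atTop (c + 1)] with R hR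
    have hb : vol n (R - c) ≠ 0 := (vol_pos (by linarith)).ne'
    have ha : vol n R ≠ 0 := (vol_pos (by linarith)).ne'
    rw [hlo_def]
    field_simp
  have hhi_tendsto : Tendsto hi atTop (nhds l) := by
    have h1 : Tendsto (fun R : ℝ => (vol n (R + r))⁻¹ * J (R + r)) atTop (nhds l) := by
      have := hg.comp (tendsto_atTop_add_const_right atTop r tendsto_id)
      simpa [Function.comp_def, vol] using this
    have h2 : Tendsto (fun R : ℝ => vol n (R + r) / vol n R) atTop (nhds 1) :=
      ratio_tendsto n r
    have h3 := h1.mul h2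
    rw [mul_one] at h3
    refine h3.congr' ?_
    filter_upwards [eventually_ge_atTop (1:ℝ)] with R hR
    have hb : vol n (R + r) ≠ 0 := (vol_pos (by linarith)).ne'
    have ha : vol n R ≠ 0 := (vol_pos (by linarith)).ne'
    rw [hhi_def]
    field_simp
  have := tendsto_of_tendsto_of_tendsto_of_le_of_le' hlo_tendsto hhi_tendsto h_lo_le h_hi_le
  exact this

/-- If the spatial averages of `H_f(S - t)` converge to `γ(f)` for every continuous
compactly supported `f`, then the empirical autocorrelation measures
`γ_R = (1/|B_R|) ∑_{x,y ∈ S ∩ B_R} δ_{y-x}` converge vaguely to `γ`. -/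
theorem autocorrelation_vague_convergence
    (S : Set (EuclideanSpace ℝ (Fin n))) (hS : LocallyFiniteSet S)
    (γ : Measure (EuclideanSpace ℝ (Fin n))) [IsLocallyFiniteMeasure γ]
    (ψ : EuclideanSpace ℝ (Fin n) → ℝ) (hψc : Continuous ψ) (hψ0 : ∀ x, 0 ≤ ψ x)
    (hψs : HasCompactSupport ψ) (hψ1 : ∫ x, ψ x = 1)
    (hconv : ∀ f : EuclideanSpace ℝ (Fin n) → ℝ, Continuous f → HasCompactSupport f →
      Tendsto (fun R : ℝ =>
          (volume (closedBall (0 : EuclideanSpace ℝ (Fin n)) R)).toReal⁻¹ *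
            ∫ t in closedBall (0 : EuclideanSpace ℝ (Fin n)) R, Hfun ψ f (translateSet t S))
        atTop (nhds (∫ z, f z ∂γ))) :
    ∀ f : EuclideanSpace ℝ (Fin n) → ℝ, Continuous f → HasCompactSupport f →
      Tendsto (fun R : ℝ =>
          (volume (closedBall (0 : EuclideanSpace ℝ (Fin n)) R)).toReal⁻¹ *
            ∑' x : (S ∩ closedBall (0 : EuclideanSpace ℝ (Fin n)) R : Set _),
              ∑' y : (S ∩ closedBall (0 : EuclideanSpace ℝ (Fin n)) R : Set _),
                f ((y : EuclideanSpace ℝ (Fin n)) - x))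
        atTop (nhds (∫ z, f z ∂γ)) := by
  intro f hfc hfs
  classical
  set g : EuclideanSpace ℝ (Fin n) → ℝ := fun x => max (f x) 0 with hg_def
  set h : EuclideanSpace ℝ (Fin n) → ℝ := fun x => max (-f x) 0 with hh_def
  have hgc : Continuous g := hfc.max continuous_const
  have hhc : Continuous h := hfc.neg.max continuous_const
  have hgsupp : Function.support g ⊆ Function.support f := by
    intro x hx
    simp only [Function.mem_support] at hx ⊢
    intro h0
    exact hx (by simp [hg_def, h0])
  have hgs : HasCompactSupport g := hfs.mono' (hgsupp.trans (subset_tsupport f))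
  have hhsupp : Function.support h ⊆ Function.support f := by
    intro x hx
    simp only [Function.mem_support] at hx ⊢
    intro h0
    exact hx (by simp [hh_def, h0])
  have hhs : HasCompactSupport h := hfs.mono' (hhsupp.trans (subset_tsupport f))
  have hg0 : ∀ x, 0 ≤ g x := fun x => le_max_right _ _
  have hh0 : ∀ x, 0 ≤ h x := fun x => le_max_right _ _
  have hfgh : ∀ x, f x = g x - h x := fun x => (max_zero_sub_eq_self (f x)).symm
  have hgt := main_nonneg S hS γ ψ hψc hψ0 hψs hψ1 hconv g hgc hgs hg0
  have hht := main_nonneg S hS γ ψ hψc hψ0 hψs hψ1 hconv h hhc hhs hh0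
  have hsub := hgt.sub hht
  -- identify the limit
  have hgint : Integrable g γ := hgc.integrable_of_hasCompactSupport hgs
  have hhint : Integrable h γ := hhc.integrable_of_hasCompactSupport hhs
  have hlim : (∫ z, g z ∂γ) - (∫ z, h z ∂γ) = ∫ z, f z ∂γ := by
    rw [← integral_sub hgint hhint]
    refine integral_congr_ae (Eventually.of_forall fun z => ?_)
    exact (hfgh z).symm
  rw [hlim] at hsub
  -- identify the functions
  refine hsub.congr fun R => ?_
  have hfin : (S ∩ closedBall (0 : EuclideanSpace ℝ (Fin n)) R).Finite :=
    hS _ (isCompact_closedBall _ _)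
  set G : Finset (EuclideanSpace ℝ (Fin n)) := hfin.toFinset with hG_def
  have hGcoe : (G : Set (EuclideanSpace ℝ (Fin n))) = S ∩ closedBall 0 R :=
    Set.Finite.coe_toFinset _
  rw [P_eq S f G hGcoe, P_eq S g G hGcoe, P_eq S h G hGcoe]
  rw [← mul_sub]
  congr 1
  rw [← Finset.sum_sub_distrib]
  refine Finset.sum_congr rfl fun x _ => ?_
  rw [← Finset.sum_sub_distrib]
  exact Finset.sum_congr rfl fun y _ => (hfgh _).symm
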